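/- arXiv:math/0408045 — 2 statements merged into one kernel-verified Lean document; each statement's English description precedes it below -/
import Mathlib

section
/- Let T be a finite double groupoid with filling condition and kT the associated weak Hopf algebra. Then the antipode S given by S(A) = (⌜(A)/⌞(A))·A^{-1} satisfies S²(A) = (⌜(A)⌟(A))/(⌞(A)⌝(A)) · A for every box A. Consequently, if tl(A) = bl(A) and br(A) = tr(A), then S²(A) = A. -/
/-- A (finite) groupoid, presented algebraically: a set `A` of arrows over a base `P`,
with source `s`, target `e`, identities, a (total, junk-valued when undefined)
composition, and inverses. Composition is written left to right: `comp a b` is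
defined when `e a = s b`. -/
structure Gpd (P : Type) (A : Type) where
  s : A → P
  e : A → P
  id : P → A
  comp : A → A → A
  inv : A → A
  s_id : ∀ p, s (id p) = p
  e_id : ∀ p, e (id p) = p
  s_comp : ∀ a b, e a = s b → s (comp a b) = s a
  e_comp : ∀ a b, e a = s b → e (comp a b) = e b
  id_comp : ∀ a, comp (id (s a)) a = a
  comp_id : ∀ a, comp a (id (e a)) = a
  comp_assoc : ∀ a b c, e a = s b → e b = s c →
    comp (comp a b) c = comp a (comp b c)
  s_inv : ∀ a, s (inv a) = e a
  e_inv : ∀ a, e (inv a) = s a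
  inv_comp : ∀ a, comp (inv a) a = id (e a)
  comp_inv : ∀ a, comp a (inv a) = id (s a)

/-- A finite double groupoid: boxes `B`, horizontal arrows `H`, vertical arrows `V`,
points `P`; boxes carry a horizontal groupoid structure over `V`
(source = left side, target = right side) and a vertical groupoid structure over `H`
(source = top side, target = bottom side), compatible with the side groupoids,
satisfying the interchange law. -/
structure DoubleGroupoid where
  P : Type
  H : Type
  V : Type
  B : Type
  [fP : Fintype P]
  [fH : Fintype H]
  [fV : Fintype V]
  [fB : Fintype B]
  [dP : DecidableEq P]
  [dH : DecidableEq H]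
  [dV : DecidableEq V]
  [dB : DecidableEq B]
  /-- horizontal arrows: source `s` = left point, target `e` = right point -/
  gH : Gpd P H
  /-- vertical arrows: source `s` = top point, target `e` = bottom point -/
  gV : Gpd P V
  /-- horizontal composition of boxes; base `V`, source = left side, target = right side -/
  gBh : Gpd V B
  /-- vertical composition of boxes; base `H`, source = top side, target = bottom side -/
  gBv : Gpd H B
  corner_tl : ∀ A, gH.s (gBv.s A) = gV.s (gBh.s A)
  corner_tr : ∀ A, gH.e (gBv.s A) = gV.s (gBh.e A)
  corner_bl : ∀ A, gH.s (gBv.e A) = gV.e (gBh.s A)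
  corner_br : ∀ A, gH.e (gBv.e A) = gV.e (gBh.e A)
  t_hcomp : ∀ A B, gBh.e A = gBh.s B →
    gBv.s (gBh.comp A B) = gH.comp (gBv.s A) (gBv.s B)
  b_hcomp : ∀ A B, gBh.e A = gBh.s B →
    gBv.e (gBh.comp A B) = gH.comp (gBv.e A) (gBv.e B)
  l_vcomp : ∀ A B, gBv.e A = gBv.s B →
    gBh.s (gBv.comp A B) = gV.comp (gBh.s A) (gBh.s B)
  r_vcomp : ∀ A B, gBv.e A = gBv.s B →
    gBh.e (gBv.comp A B) = gV.comp (gBh.e A) (gBh.e B)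
  t_idh : ∀ g, gBv.s (gBh.id g) = gH.id (gV.s g)
  b_idh : ∀ g, gBv.e (gBh.id g) = gH.id (gV.e g)
  l_idv : ∀ x, gBh.s (gBv.id x) = gV.id (gH.s x)
  r_idv : ∀ x, gBh.e (gBv.id x) = gV.id (gH.e x)
  t_hinv : ∀ A, gBv.s (gBh.inv A) = gH.inv (gBv.s A)
  b_hinv : ∀ A, gBv.e (gBh.inv A) = gH.inv (gBv.e A)
  l_vinv : ∀ A, gBh.s (gBv.inv A) = gV.inv (gBh.s A)
  r_vinv : ∀ A, gBh.e (gBv.inv A) = gV.inv (gBh.e A)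
  hinv_vinv : ∀ A, gBh.inv (gBv.inv A) = gBv.inv (gBh.inv A)
  idh_vcomp : ∀ g h, gV.e g = gV.s h →
    gBv.comp (gBh.id g) (gBh.id h) = gBh.id (gV.comp g h)
  idv_hcomp : ∀ x y, gH.e x = gH.s y →
    gBh.comp (gBv.id x) (gBv.id y) = gBv.id (gH.comp x y)
  id_id : ∀ p, gBh.id (gV.id p) = gBv.id (gH.id p)
  interchange : ∀ A B C D,
    gBh.e A = gBh.s B → gBh.e C = gBh.s D →
    gBv.e A = gBv.s C → gBv.e B = gBv.s D →
    gBv.comp (gBh.comp A B) (gBh.comp C D) =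
      gBh.comp (gBv.comp A C) (gBv.comp B D)

namespace DoubleGroupoid

instance (T : DoubleGroupoid) : Fintype T.P := T.fP
instance (T : DoubleGroupoid) : Fintype T.H := T.fH
instance (T : DoubleGroupoid) : Fintype T.V := T.fV
instance (T : DoubleGroupoid) : Fintype T.B := T.fB
instance (T : DoubleGroupoid) : DecidableEq T.P := T.dP
instance (T : DoubleGroupoid) : DecidableEq T.H := T.dH
instance (T : DoubleGroupoid) : DecidableEq T.V := T.dV
instance (T : DoubleGroupoid) : DecidableEq T.B := T.dB

variable (T : DoubleGroupoid)

/-- top side of a box -/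
def top (A : T.B) : T.H := T.gBv.s A
/-- bottom side of a box -/
def bot (A : T.B) : T.H := T.gBv.e A
/-- left side of a box -/
def left (A : T.B) : T.V := T.gBh.s A
/-- right side of a box -/
def right (A : T.B) : T.V := T.gBh.e A

/-- horizontal composition -/
def hcomp (A B : T.B) : T.B := T.gBh.comp A B
/-- vertical composition ("A over B") -/
def vcomp (A B : T.B) : T.B := T.gBv.comp A B
/-- horizontal inverse -/
def hinv (A : T.B) : T.B := T.gBh.inv A
/-- vertical inverse -/
def vinv (A : T.B) : T.B := T.gBv.inv A
/-- total inverse `A⁻¹ = (Aʰ)ᵛ` -/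
def tinv (A : T.B) : T.B := T.gBv.inv (T.gBh.inv A)

/-- top-left vertex -/
def tl (A : T.B) : T.P := T.gH.s (T.top A)
/-- top-right vertex -/
def tr (A : T.B) : T.P := T.gH.e (T.top A)
/-- bottom-left vertex -/
def bl (A : T.B) : T.P := T.gH.s (T.bot A)
/-- bottom-right vertex -/
def br (A : T.B) : T.P := T.gH.e (T.bot A)
/-- right-top vertex (equal to `tr` by the corner compatibilities) -/
def rt (A : T.B) : T.P := T.gV.s (T.right A)
/-- right-bottom vertex -/
def rb (A : T.B) : T.P := T.gV.e (T.right A)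
/-- left-top vertex -/
def lt (A : T.B) : T.P := T.gV.s (T.left A)
/-- left-bottom vertex -/
def lb (A : T.B) : T.P := T.gV.e (T.left A)

/-- upper-left corner function: number of boxes with the same left and top sides -/
noncomputable def ulc (A : T.B) : ℕ :=
  Nat.card {U : T.B // T.left U = T.left A ∧ T.top U = T.top A}
/-- upper-right corner function: number of boxes with the same right and top sides -/
noncomputable def urc (A : T.B) : ℕ :=
  Nat.card {U : T.B // T.right U = T.right A ∧ T.top U = T.top A}
/-- lower-left corner function: number of boxes with the same left and bottom sides -/
noncomputable def llc (A : T.B) : ℕ :=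
  Nat.card {U : T.B // T.left U = T.left A ∧ T.bot U = T.bot A}
/-- lower-right corner function: number of boxes with the same right and bottom sides -/
noncomputable def lrc (A : T.B) : ℕ :=
  Nat.card {U : T.B // T.right U = T.right A ∧ T.bot U = T.bot A}

/-- the double identity box `Θ_P` at a point -/
def thetaBox (p : T.P) : T.B := T.gBv.id (T.gH.id p)

/-- the filling condition: every compatible pair (right side, top side) bounds a box -/
def Filling : Prop :=
  ∀ (g : T.V) (x : T.H), T.gH.e x = T.gV.s g →
    ∃ A : T.B, T.top A = x ∧ T.right A = g

/-- membership in the core groupoid `D`: the left and bottom sides are identities -/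
def isCoreD (D : T.B) : Prop :=
  T.left D = T.gV.id (T.gV.s (T.left D)) ∧ T.bot D = T.gH.id (T.gH.s (T.bot D))

/-- membership in the core groupoid `E`: the right and top sides are identities -/
def isCoreE (E : T.B) : Prop :=
  T.right E = T.gV.id (T.gV.s (T.right E)) ∧ T.top E = T.gH.id (T.gH.s (T.top E))

/-- `θ(p)`: the number of boxes whose left and bottom sides are identities at `p` -/
noncomputable def thetaLB (p : T.P) : ℕ :=
  Nat.card {U : T.B // T.left U = T.gV.id p ∧ T.bot U = T.gH.id p}

end DoubleGroupoid

/-- the antipode `S(A) = (⌜(A)/⌞(A)) A⁻¹` of the weak Hopf algebra `kT`,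
as a linear map on the span of the boxes. -/
noncomputable def DoubleGroupoid.amap (k : Type) [Field k] (T : DoubleGroupoid) :
    (T.B →₀ k) →ₗ[k] (T.B →₀ k) :=
  Finsupp.lsum k fun A => LinearMap.toSpanSingleton k (T.B →₀ k)
    (((T.ulc A : k) / (T.llc A : k)) • Finsupp.single (T.tinv A) (1 : k))


section Aux

theorem Gpd.inv_invol {P A : Type} (G : Gpd P A) (a : A) : G.inv (G.inv a) = a := by
  have h := G.comp_assoc a (G.inv a) (G.inv (G.inv a)) (G.s_inv a).symm
    (G.s_inv (G.inv a)).symm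
  rw [G.comp_inv a, G.comp_inv (G.inv a), G.s_inv a, G.comp_id a] at h
  have h2 : G.s a = G.s (G.inv (G.inv a)) := by rw [G.s_inv, G.e_inv]
  rw [h2, G.id_comp] at h
  exact h

theorem Gpd.inv_ident {P A : Type} (G : Gpd P A) (p : P) : G.inv (G.id p) = G.id p := by
  have h := G.comp_inv (G.id p)
  rw [G.s_id] at h
  have h2 := G.id_comp (G.inv (G.id p))
  rw [G.s_inv, G.e_id] at h2
  rw [h] at h2
  exact h2.symm

namespace DoubleGroupoid

variable (T : DoubleGroupoid)

theorem top_hinv' (A : T.B) : T.top (T.hinv A) = T.gH.inv (T.top A) := T.t_hinv A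
theorem bot_hinv' (A : T.B) : T.bot (T.hinv A) = T.gH.inv (T.bot A) := T.b_hinv A
theorem left_hinv' (A : T.B) : T.left (T.hinv A) = T.right A := T.gBh.s_inv A
theorem right_hinv' (A : T.B) : T.right (T.hinv A) = T.left A := T.gBh.e_inv A
theorem top_vinv' (A : T.B) : T.top (T.vinv A) = T.bot A := T.gBv.s_inv A
theorem bot_vinv' (A : T.B) : T.bot (T.vinv A) = T.top A := T.gBv.e_inv A
theorem left_vinv' (A : T.B) : T.left (T.vinv A) = T.gV.inv (T.left A) := T.l_vinv A
theorem right_vinv' (A : T.B) : T.right (T.vinv A) = T.gV.inv (T.right A) := T.r_vinv A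

theorem top_tinv' (A : T.B) : T.top (T.tinv A) = T.gH.inv (T.bot A) := by
  show T.top (T.vinv (T.hinv A)) = _
  rw [T.top_vinv', T.bot_hinv']

theorem bot_tinv' (A : T.B) : T.bot (T.tinv A) = T.gH.inv (T.top A) := by
  show T.bot (T.vinv (T.hinv A)) = _
  rw [T.bot_vinv', T.top_hinv']

theorem left_tinv' (A : T.B) : T.left (T.tinv A) = T.gV.inv (T.right A) := by
  show T.left (T.vinv (T.hinv A)) = _
  rw [T.left_vinv', T.left_hinv']

theorem right_tinv' (A : T.B) : T.right (T.tinv A) = T.gV.inv (T.left A) := by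
  show T.right (T.vinv (T.hinv A)) = _
  rw [T.right_vinv', T.right_hinv']

theorem hinv_hinv (A : T.B) : T.hinv (T.hinv A) = A := T.gBh.inv_invol A
theorem vinv_vinv (A : T.B) : T.vinv (T.vinv A) = A := T.gBv.inv_invol A

theorem tinv_tinv (A : T.B) : T.tinv (T.tinv A) = A := by
  unfold tinv
  rw [T.hinv_vinv, T.gBh.inv_invol, T.gBv.inv_invol]

theorem right_hcomp (U V : T.B) (h : T.right U = T.left V) :
    T.right (T.hcomp U V) = T.right V := T.gBh.e_comp U V h
theorem left_hcomp (U V : T.B) (h : T.right U = T.left V) :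
    T.left (T.hcomp U V) = T.left U := T.gBh.s_comp U V h
theorem top_hcomp (U V : T.B) (h : T.right U = T.left V) :
    T.top (T.hcomp U V) = T.gH.comp (T.top U) (T.top V) := T.t_hcomp U V h
theorem bot_hcomp (U V : T.B) (h : T.right U = T.left V) :
    T.bot (T.hcomp U V) = T.gH.comp (T.bot U) (T.bot V) := T.b_hcomp U V h
theorem top_vcomp (U V : T.B) (h : T.bot U = T.top V) :
    T.top (T.vcomp U V) = T.top U := T.gBv.s_comp U V h
theorem bot_vcomp (U V : T.B) (h : T.bot U = T.top V) :
    T.bot (T.vcomp U V) = T.bot V := T.gBv.e_comp U V h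
theorem left_vcomp (U V : T.B) (h : T.bot U = T.top V) :
    T.left (T.vcomp U V) = T.gV.comp (T.left U) (T.left V) := T.l_vcomp U V h
theorem right_vcomp (U V : T.B) (h : T.bot U = T.top V) :
    T.right (T.vcomp U V) = T.gV.comp (T.right U) (T.right V) := T.r_vcomp U V h

/-- Key counting lemma: `⌝(B) = θ(bl B)`. -/
theorem urc_eq_theta (B : T.B) : T.urc B = T.thetaLB (T.bl B) := by
  have hsf : T.gV.s (T.left B) = T.tl B := (T.corner_tl B).symm
  have hef : T.gV.e (T.left B) = T.bl B := (T.corner_bl B).symm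
  -- step 1 : strip off B horizontally
  have h1 : Nat.card {U : T.B // T.right U = T.right B ∧ T.top U = T.top B} =
      Nat.card {W : T.B // T.right W = T.left B ∧ T.top W = T.gH.id (T.tl B)} := by
    apply Nat.card_congr
    refine
      { toFun := fun U => ⟨T.hcomp U.1 (T.hinv B), ?_, ?_⟩
        invFun := fun W => ⟨T.hcomp W.1 B, ?_, ?_⟩
        left_inv := ?_
        right_inv := ?_ }
    · have hc : T.right U.1 = T.left (T.hinv B) := by rw [T.left_hinv']; exact U.2.1
      rw [T.right_hcomp _ _ hc, T.right_hinv']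
    · have hc : T.right U.1 = T.left (T.hinv B) := by rw [T.left_hinv']; exact U.2.1
      rw [T.top_hcomp _ _ hc, U.2.2, T.top_hinv']
      exact T.gH.comp_inv (T.top B)
    · rw [T.right_hcomp _ _ W.2.1]
    · rw [T.top_hcomp _ _ W.2.1, W.2.2]
      exact T.gH.id_comp (T.top B)
    · intro U
      apply Subtype.ext
      show T.gBh.comp (T.gBh.comp U.1 (T.gBh.inv B)) B = U.1
      have hc : T.gBh.e U.1 = T.gBh.s (T.gBh.inv B) := by
        rw [T.gBh.s_inv]; exact U.2.1
      rw [T.gBh.comp_assoc U.1 (T.gBh.inv B) B hc (T.gBh.e_inv B), T.gBh.inv_comp]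
      have h2 : T.gBh.e U.1 = T.gBh.e B := U.2.1
      rw [← h2, T.gBh.comp_id]
    · intro W
      apply Subtype.ext
      show T.gBh.comp (T.gBh.comp W.1 B) (T.gBh.inv B) = W.1
      have hc : T.gBh.e W.1 = T.gBh.s B := W.2.1
      rw [T.gBh.comp_assoc W.1 B (T.gBh.inv B) hc (T.gBh.s_inv B).symm, T.gBh.comp_inv]
      have h2 : T.gBh.e W.1 = T.gBh.s B := W.2.1
      rw [← h2, T.gBh.comp_id]
  -- step 2 : apply the total inverse
  have h2 : Nat.card {W : T.B // T.right W = T.left B ∧ T.top W = T.gH.id (T.tl B)} =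
      Nat.card {V : T.B // T.left V = T.gV.inv (T.left B) ∧ T.bot V = T.gH.id (T.tl B)} := by
    apply Nat.card_congr
    refine
      { toFun := fun W => ⟨T.tinv W.1, ?_, ?_⟩
        invFun := fun V => ⟨T.tinv V.1, ?_, ?_⟩
        left_inv := fun W => Subtype.ext (T.tinv_tinv W.1)
        right_inv := fun V => Subtype.ext (T.tinv_tinv V.1) }
    · rw [T.left_tinv', W.2.1]
    · rw [T.bot_tinv', W.2.2, T.gH.inv_ident]
    · rw [T.right_tinv', V.2.1, T.gV.inv_invol]
    · rw [T.top_tinv', V.2.2, T.gH.inv_ident]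
  -- step 3 : straighten the left side
  have h3 : Nat.card {V : T.B // T.left V = T.gV.inv (T.left B) ∧ T.bot V = T.gH.id (T.tl B)} =
      Nat.card {D : T.B // T.left D = T.gV.id (T.bl B) ∧ T.bot D = T.gH.id (T.bl B)} := by
    have htop_id : T.top (T.gBh.id (T.left B)) = T.gH.id (T.tl B) := by
      have h := T.t_idh (T.left B); rw [hsf] at h; exact h
    have hbot_id : T.bot (T.gBh.id (T.left B)) = T.gH.id (T.bl B) := by
      have h := T.b_idh (T.left B); rw [hef] at h; exact h
    have hleft_id : T.left (T.gBh.id (T.left B)) = T.left B := T.gBh.s_id _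
    have htop_id' : T.top (T.gBh.id (T.gV.inv (T.left B))) = T.gH.id (T.bl B) := by
      have h := T.t_idh (T.gV.inv (T.left B))
      rw [T.gV.s_inv, hef] at h; exact h
    have hbot_id' : T.bot (T.gBh.id (T.gV.inv (T.left B))) = T.gH.id (T.tl B) := by
      have h := T.b_idh (T.gV.inv (T.left B))
      rw [T.gV.e_inv, hsf] at h; exact h
    have hleft_id' : T.left (T.gBh.id (T.gV.inv (T.left B))) = T.gV.inv (T.left B) :=
      T.gBh.s_id _
    apply Nat.card_congr
    refine
      { toFun := fun V => ⟨T.vcomp V.1 (T.gBh.id (T.left B)), ?_, ?_⟩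
        invFun := fun D => ⟨T.vcomp D.1 (T.gBh.id (T.gV.inv (T.left B))), ?_, ?_⟩
        left_inv := ?_
        right_inv := ?_ }
    · have hc : T.bot V.1 = T.top (T.gBh.id (T.left B)) := by rw [htop_id]; exact V.2.2
      rw [T.left_vcomp _ _ hc, V.2.1, hleft_id, T.gV.inv_comp, hef]
    · have hc : T.bot V.1 = T.top (T.gBh.id (T.left B)) := by rw [htop_id]; exact V.2.2
      rw [T.bot_vcomp _ _ hc, hbot_id]
    · have hc : T.bot D.1 = T.top (T.gBh.id (T.gV.inv (T.left B))) := by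
        rw [htop_id']; exact D.2.2
      rw [T.left_vcomp _ _ hc, D.2.1, hleft_id']
      have h := T.gV.id_comp (T.gV.inv (T.left B))
      rw [T.gV.s_inv, hef] at h
      exact h
    · have hc : T.bot D.1 = T.top (T.gBh.id (T.gV.inv (T.left B))) := by
        rw [htop_id']; exact D.2.2
      rw [T.bot_vcomp _ _ hc, hbot_id']
    · intro V
      apply Subtype.ext
      show T.gBv.comp (T.gBv.comp V.1 (T.gBh.id (T.left B)))
        (T.gBh.id (T.gV.inv (T.left B))) = V.1
      have hc : T.gBv.e V.1 = T.gBv.s (T.gBh.id (T.left B)) := by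
        show T.bot V.1 = T.top (T.gBh.id (T.left B))
        rw [htop_id]; exact V.2.2
      have hmid : T.gBv.e (T.gBh.id (T.left B)) =
          T.gBv.s (T.gBh.id (T.gV.inv (T.left B))) := by
        show T.bot (T.gBh.id (T.left B)) = T.top (T.gBh.id (T.gV.inv (T.left B)))
        rw [hbot_id, htop_id']
      rw [T.gBv.comp_assoc _ _ _ hc hmid]
      have hinner : T.gBv.comp (T.gBh.id (T.left B)) (T.gBh.id (T.gV.inv (T.left B))) =
          T.gBv.id (T.gH.id (T.tl B)) := by
        rw [T.idh_vcomp _ _ (T.gV.s_inv (T.left B)).symm, T.gV.comp_inv, hsf, T.id_id]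
      rw [hinner]
      have hv : T.gBv.e V.1 = T.gH.id (T.tl B) := V.2.2
      have h := T.gBv.comp_id V.1
      rw [hv] at h
      exact h
    · intro D
      apply Subtype.ext
      show T.gBv.comp (T.gBv.comp D.1 (T.gBh.id (T.gV.inv (T.left B))))
        (T.gBh.id (T.left B)) = D.1
      have hc : T.gBv.e D.1 = T.gBv.s (T.gBh.id (T.gV.inv (T.left B))) := by
        show T.bot D.1 = T.top (T.gBh.id (T.gV.inv (T.left B)))
        rw [htop_id']; exact D.2.2
      have hmid : T.gBv.e (T.gBh.id (T.gV.inv (T.left B))) =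
          T.gBv.s (T.gBh.id (T.left B)) := by
        show T.bot (T.gBh.id (T.gV.inv (T.left B))) = T.top (T.gBh.id (T.left B))
        rw [hbot_id', htop_id]
      rw [T.gBv.comp_assoc _ _ _ hc hmid]
      have hinner : T.gBv.comp (T.gBh.id (T.gV.inv (T.left B))) (T.gBh.id (T.left B)) =
          T.gBv.id (T.gH.id (T.bl B)) := by
        rw [T.idh_vcomp _ _ (T.gV.e_inv (T.left B)), T.gV.inv_comp, hef, T.id_id]
      rw [hinner]
      have hd : T.gBv.e D.1 = T.gH.id (T.bl B) := D.2.2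
      have h := T.gBv.comp_id D.1
      rw [hd] at h
      exact h
  unfold urc thetaLB
  rw [h1, h2, h3]

theorem ulc_eq_urc_hinv (A : T.B) : T.ulc A = T.urc (T.hinv A) := by
  unfold ulc urc
  apply Nat.card_congr
  refine
    { toFun := fun U => ⟨T.hinv U.1, ?_, ?_⟩
      invFun := fun V => ⟨T.hinv V.1, ?_, ?_⟩
      left_inv := fun U => Subtype.ext (T.hinv_hinv U.1)
      right_inv := fun V => Subtype.ext (T.hinv_hinv V.1) }
  · rw [T.right_hinv', T.right_hinv', U.2.1]
  · rw [T.top_hinv', T.top_hinv', U.2.2]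
  · rw [T.left_hinv', V.2.1, T.right_hinv']
  · rw [T.top_hinv', V.2.2, T.top_hinv', T.gH.inv_invol]

theorem lrc_eq_urc_vinv (A : T.B) : T.lrc A = T.urc (T.vinv A) := by
  unfold lrc urc
  apply Nat.card_congr
  refine
    { toFun := fun U => ⟨T.vinv U.1, ?_, ?_⟩
      invFun := fun V => ⟨T.vinv V.1, ?_, ?_⟩
      left_inv := fun U => Subtype.ext (T.vinv_vinv U.1)
      right_inv := fun V => Subtype.ext (T.vinv_vinv V.1) }
  · rw [T.right_vinv', T.right_vinv', U.2.1]
  · rw [T.top_vinv', T.top_vinv', U.2.2]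
  · rw [T.right_vinv', V.2.1, T.right_vinv', T.gV.inv_invol]
  · rw [T.bot_vinv', V.2.2, T.top_vinv']

theorem llc_eq_urc_tinv (A : T.B) : T.llc A = T.urc (T.tinv A) := by
  unfold llc urc
  apply Nat.card_congr
  refine
    { toFun := fun U => ⟨T.tinv U.1, ?_, ?_⟩
      invFun := fun V => ⟨T.tinv V.1, ?_, ?_⟩
      left_inv := fun U => Subtype.ext (T.tinv_tinv U.1)
      right_inv := fun V => Subtype.ext (T.tinv_tinv V.1) }
  · rw [T.right_tinv', T.right_tinv', U.2.1]
  · rw [T.top_tinv', T.top_tinv', U.2.2]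
  · rw [T.left_tinv', V.2.1, T.right_tinv', T.gV.inv_invol]
  · rw [T.bot_tinv', V.2.2, T.top_tinv', T.gH.inv_invol]

theorem ulc_eq_theta (A : T.B) : T.ulc A = T.thetaLB (T.br A) := by
  rw [T.ulc_eq_urc_hinv, T.urc_eq_theta]
  congr 1
  show T.gH.s (T.bot (T.hinv A)) = T.gH.e (T.bot A)
  rw [T.bot_hinv', T.gH.s_inv]

theorem lrc_eq_theta (A : T.B) : T.lrc A = T.thetaLB (T.tl A) := by
  rw [T.lrc_eq_urc_vinv, T.urc_eq_theta]
  congr 1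
  show T.gH.s (T.bot (T.vinv A)) = T.gH.s (T.top A)
  rw [T.bot_vinv']

theorem llc_eq_theta (A : T.B) : T.llc A = T.thetaLB (T.tr A) := by
  rw [T.llc_eq_urc_tinv, T.urc_eq_theta]
  congr 1
  show T.gH.s (T.bot (T.tinv A)) = T.gH.e (T.top A)
  rw [T.bot_tinv', T.gH.s_inv]

theorem urc_eq_theta' (A : T.B) : T.urc A = T.thetaLB (T.bl A) := T.urc_eq_theta A

theorem ulc_tinv (A : T.B) : T.ulc (T.tinv A) = T.lrc A := by
  rw [T.ulc_eq_theta, T.lrc_eq_theta]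
  congr 1
  show T.gH.e (T.bot (T.tinv A)) = T.gH.s (T.top A)
  rw [T.bot_tinv', T.gH.e_inv]

theorem llc_tinv (A : T.B) : T.llc (T.tinv A) = T.urc A := by
  rw [T.llc_eq_theta, T.urc_eq_theta]
  congr 1
  show T.gH.e (T.top (T.tinv A)) = T.gH.s (T.bot A)
  rw [T.top_tinv', T.gH.e_inv]

theorem ulc_pos (A : T.B) : T.ulc A ≠ 0 := by
  unfold ulc
  have : Nonempty {U : T.B // T.left U = T.left A ∧ T.top U = T.top A} :=
    ⟨⟨A, rfl, rfl⟩⟩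
  exact Nat.card_pos.ne'

theorem llc_pos (A : T.B) : T.llc A ≠ 0 := by
  unfold llc
  have : Nonempty {U : T.B // T.left U = T.left A ∧ T.bot U = T.bot A} :=
    ⟨⟨A, rfl, rfl⟩⟩
  exact Nat.card_pos.ne'

theorem urc_pos (A : T.B) : T.urc A ≠ 0 := by
  unfold urc
  have : Nonempty {U : T.B // T.right U = T.right A ∧ T.top U = T.top A} :=
    ⟨⟨A, rfl, rfl⟩⟩
  exact Nat.card_pos.ne'

end DoubleGroupoid

end Aux

/-- the antipode satisfies
`S²(A) = (⌜(A)⌟(A))/(⌞(A)⌝(A)) ⋅ A`; consequently if `tl A = bl A` and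
`br A = tr A` then `S²(A) = A`. -/
theorem stmt12 (k : Type) [Field k] [CharZero k]
    (T : DoubleGroupoid) (hfill : T.Filling) :
    (∀ A : T.B, T.amap k (T.amap k (Finsupp.single A 1)) =
      (((T.ulc A : k) * (T.lrc A : k)) / ((T.llc A : k) * (T.urc A : k))) •
        Finsupp.single A 1) ∧
    (∀ A : T.B, T.tl A = T.bl A → T.br A = T.tr A →
      T.amap k (T.amap k (Finsupp.single A 1)) = Finsupp.single A 1) := by
  have amap_single : ∀ A : T.B, T.amap k (Finsupp.single A 1) =
      ((T.ulc A : k) / (T.llc A : k)) • Finsupp.single (T.tinv A) (1 : k) := by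
    intro A
    show (Finsupp.lsum k fun A => LinearMap.toSpanSingleton k (T.B →₀ k)
      (((T.ulc A : k) / (T.llc A : k)) • Finsupp.single (T.tinv A) (1 : k)))
      (Finsupp.single A 1) = _
    rw [Finsupp.lsum_single, LinearMap.toSpanSingleton_apply, one_smul]
  have key : ∀ A : T.B, T.amap k (T.amap k (Finsupp.single A 1)) =
      (((T.ulc A : k) * (T.lrc A : k)) / ((T.llc A : k) * (T.urc A : k))) •
        Finsupp.single A 1 := by
    intro A
    rw [amap_single A, map_smul, amap_single (T.tinv A), T.tinv_tinv, T.ulc_tinv,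
      T.llc_tinv, smul_smul, div_mul_div_comm]
  refine ⟨key, fun A h1 h2 => ?_⟩
  rw [key A]
  have hnum : T.ulc A * T.lrc A = T.llc A * T.urc A := by
    rw [T.ulc_eq_theta, T.lrc_eq_theta, T.llc_eq_theta, T.urc_eq_theta, h1, h2,
      Nat.mul_comm]
  have hden : T.llc A * T.urc A ≠ 0 := Nat.mul_ne_zero (T.llc_pos A) (T.urc_pos A)
  rw [← Nat.cast_mul, ← Nat.cast_mul, hnum, div_self, one_smul]
  exact_mod_cast hden
end

section
/- Let E and M be elements of the core groupoid E (boxes with identity right and top sides) of a finite double groupoid T. Then E and M are vertically connected (there exists g ∈ V with t(g) = e(E) and b(g) = e(M), where e denotes the bottom-right vertex) if and only if there exists a box A with b(E)b(A) an identity and M = A ↷ E, where A ↷ E is the vertical composite of id^v l(A), E, and A^{-1} (top to bottom). -/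
namespace DoubleGroupoid
variable (T : DoubleGroupoid)

/-- the action `A ↷ E`: the vertical composite of `id^h l(A)`, `E`, `A⁻¹`
(top to bottom). -/
def curve (A E : T.B) : T.B :=
  T.vcomp (T.gBh.id (T.left A)) (T.vcomp E (T.tinv A))

end DoubleGroupoid

namespace Gpd
variable {P A : Type} (G : Gpd P A)

theorem inv_id (p : P) : G.inv (G.id p) = G.id p := by
  have h1 := G.comp_id (G.inv (G.id p))
  rw [G.e_inv, G.s_id] at h1
  have h2 := G.inv_comp (G.id p)
  rw [G.e_id] at h2
  rw [← h1, h2]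

theorem inv_inv (a : A) : G.inv (G.inv a) = a := by
  have c1 : G.e a = G.s (G.inv a) := (G.s_inv a).symm
  have c2 : G.e (G.inv a) = G.s (G.inv (G.inv a)) := (G.s_inv _).symm
  have h := G.comp_assoc a (G.inv a) (G.inv (G.inv a)) c1 c2
  rw [G.comp_inv a, G.comp_inv (G.inv a), G.s_inv, G.comp_id] at h
  have hs : G.s a = G.s (G.inv (G.inv a)) := by rw [G.s_inv, G.e_inv]
  rw [hs, G.id_comp] at h
  exact h

theorem eq_inv_of_comp {a b : A} (h : G.e a = G.s b)
    (hid : G.comp a b = G.id (G.s a)) : b = G.inv a := by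
  have hb : b = G.comp (G.id (G.e a)) b := by rw [h, G.id_comp]
  rw [← G.inv_comp a, G.comp_assoc _ _ _ (by rw [G.e_inv]) h, hid] at hb
  rw [show G.s a = G.e (G.inv a) from (G.e_inv a).symm, G.comp_id] at hb
  exact hb

theorem comp_inv_rev {a b : A} (h : G.e a = G.s b) :
    G.inv (G.comp a b) = G.comp (G.inv b) (G.inv a) := by
  have hc : G.e (G.inv b) = G.s (G.inv a) := by rw [G.e_inv, G.s_inv, h]
  symm
  apply G.eq_inv_of_comp
  · rw [G.e_comp _ _ h, G.s_comp _ _ hc, G.s_inv]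
  · rw [G.comp_assoc a b _ h (by rw [G.s_comp _ _ hc, G.s_inv]),
      ← G.comp_assoc b (G.inv b) (G.inv a) (G.s_inv b).symm hc,
      G.comp_inv b, show G.s b = G.s (G.inv a) by rw [G.s_inv, h],
      G.id_comp, G.comp_inv, G.s_comp _ _ h]

end Gpd

namespace DoubleGroupoid
variable (T : DoubleGroupoid)

theorem hinv_vcomp (A B : T.B) (h : T.gBv.e A = T.gBv.s B) :
    T.gBh.inv (T.gBv.comp A B) = T.gBv.comp (T.gBh.inv A) (T.gBh.inv B) := by
  have hinvc : T.gBv.e (T.gBh.inv A) = T.gBv.s (T.gBh.inv B) := by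
    rw [T.b_hinv, T.t_hinv, h]
  symm
  apply Gpd.eq_inv_of_comp
  · rw [T.r_vcomp _ _ h, T.l_vcomp _ _ hinvc, T.gBh.s_inv, T.gBh.s_inv]
  · rw [← T.interchange A (T.gBh.inv A) B (T.gBh.inv B)
      (T.gBh.s_inv A).symm (T.gBh.s_inv B).symm h hinvc,
      T.gBh.comp_inv A, T.gBh.comp_inv B,
      T.idh_vcomp _ _ (by rw [← T.corner_bl, ← T.corner_tl, h]),
      T.l_vcomp _ _ h]

theorem vinv_idh (g : T.V) :
    T.gBv.inv (T.gBh.id g) = T.gBh.id (T.gV.inv g) := by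
  symm
  apply Gpd.eq_inv_of_comp
  · rw [T.b_idh, T.t_idh, T.gV.s_inv]
  · rw [T.idh_vcomp _ _ (T.gV.s_inv g).symm, T.gV.comp_inv, T.id_id, T.t_idh]

theorem tinv_vcomp (A B : T.B) (h : T.gBv.e A = T.gBv.s B) :
    T.tinv (T.gBv.comp A B) = T.gBv.comp (T.tinv B) (T.tinv A) := by
  have hinvc : T.gBv.e (T.gBh.inv A) = T.gBv.s (T.gBh.inv B) := by
    rw [T.b_hinv, T.t_hinv, h]
  show T.gBv.inv (T.gBh.inv _) = _
  rw [T.hinv_vcomp _ _ h, T.gBv.comp_inv_rev hinvc]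
  rfl

theorem tinv_idh (g : T.V) : T.tinv (T.gBh.id g) = T.gBh.id (T.gV.inv g) := by
  show T.gBv.inv (T.gBh.inv (T.gBh.id g)) = _
  rw [T.gBh.inv_id, T.vinv_idh]

theorem t_tinv (A : T.B) : T.gBv.s (T.tinv A) = T.gH.inv (T.gBv.e A) := by
  show T.gBv.s (T.gBv.inv _) = _
  rw [T.gBv.s_inv, T.b_hinv]

theorem b_tinv (A : T.B) : T.gBv.e (T.tinv A) = T.gH.inv (T.gBv.s A) := by
  show T.gBv.e (T.gBv.inv _) = _
  rw [T.gBv.e_inv, T.t_hinv]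

theorem l_tinv (A : T.B) : T.gBh.s (T.tinv A) = T.gV.inv (T.gBh.e A) := by
  show T.gBh.s (T.gBv.inv _) = _
  rw [T.l_vinv, T.gBh.s_inv]

theorem coreE_br {E : T.B} (hE : T.isCoreE E) :
    T.gV.s (T.gBh.e E) = T.gH.e (T.gBv.e E) := by
  have h1 : T.gBh.e E = T.gV.id (T.gV.s (T.gBh.e E)) := hE.1
  rw [T.corner_br]
  conv_rhs => rw [h1]
  rw [T.gV.e_id]

theorem coreE_right {E : T.B} (hE : T.isCoreE E) :
    T.gBh.e E = T.gV.id (T.gH.e (T.gBv.e E)) := by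
  rw [← T.coreE_br hE]; exact hE.1

theorem coreE_top {E : T.B} (hE : T.isCoreE E) :
    T.gBv.s E = T.gH.id (T.gH.e (T.gBv.e E)) := by
  have h2 : T.gBv.s E = T.gH.id (T.gH.s (T.gBv.s E)) := hE.2
  have : T.gH.s (T.gBv.s E) = T.gH.e (T.gBv.e E) := by
    have htr : T.gH.e (T.gBv.s E) = T.gH.e (T.gBv.e E) := by
      rw [T.corner_tr, T.coreE_br hE]
    rw [← htr]
    conv_lhs => rw [h2]
    rw [T.gH.s_id]
    conv_rhs => rw [h2]
    rw [T.gH.e_id]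
  rw [← this]; exact h2

end DoubleGroupoid

/-- two elements `E`, `M` of the core groupoid `E` are vertically
connected (some vertical arrow joins their bottom-right vertices) iff there is a
box `A` with `b(E)b(A)` an identity and `M = A ↷ E`. -/
theorem stmt19 (T : DoubleGroupoid) (E M : T.B)
    (hE : T.isCoreE E) (hM : T.isCoreE M) :
    (∃ g : T.V, T.gV.s g = T.br E ∧ T.gV.e g = T.br M) ↔
    (∃ A : T.B, T.gH.e (T.bot E) = T.gH.s (T.bot A) ∧
      T.gH.comp (T.bot E) (T.bot A) = T.gH.id (T.gH.s (T.bot E)) ∧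
      M = T.curve A E) := by
  simp only [DoubleGroupoid.br, DoubleGroupoid.bot, DoubleGroupoid.curve,
    DoubleGroupoid.vcomp, DoubleGroupoid.left, DoubleGroupoid.top]
  constructor
  · rintro ⟨g, hs, he⟩
    set A : T.B := T.gBv.comp (T.tinv M)
      (T.gBv.comp (T.gBh.id (T.gV.inv g)) (T.gBh.inv E)) with hA
    have d1 : T.gBv.e (T.gBh.id (T.gV.inv g)) = T.gBv.s (T.gBh.inv E) := by
      rw [T.b_idh, T.gV.e_inv, hs, T.t_hinv, T.coreE_top hE, T.gH.inv_id]
    have d2 : T.gBv.e (T.tinv M) =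
        T.gBv.s (T.gBv.comp (T.gBh.id (T.gV.inv g)) (T.gBh.inv E)) := by
      rw [T.b_tinv, T.coreE_top hM, T.gH.inv_id, T.gBv.s_comp _ _ d1,
        T.t_idh, T.gV.s_inv, he]
    have hbotA : T.gBv.e A = T.gH.inv (T.gBv.e E) := by
      rw [hA, T.gBv.e_comp _ _ d2, T.gBv.e_comp _ _ d1, T.b_hinv]
    have hlA : T.gBh.s A = T.gV.inv g := by
      rw [hA, T.l_vcomp _ _ d2, T.l_vcomp _ _ d1, T.l_tinv, T.coreE_right hM,
        T.gV.inv_id, T.gBh.s_id, T.gBh.s_inv, T.coreE_right hE]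
      have e1 : T.gV.e (T.gV.inv g) = T.gH.e (T.gBv.e E) := by
        rw [T.gV.e_inv, hs]
      rw [← e1, T.gV.comp_id]
      have s1 : T.gH.e (T.gBv.e M) = T.gV.s (T.gV.inv g) := by
        rw [T.gV.s_inv, he]
      rw [s1, T.gV.id_comp]
    have htA : T.tinv A =
        T.gBv.comp (T.gBv.comp (T.gBv.inv E) (T.gBh.id g)) M := by
      rw [hA, T.tinv_vcomp _ _ d2, T.tinv_vcomp _ _ d1, T.tinv_tinv,
        T.tinv_idh, T.gV.inv_inv]
      have hE2 : T.tinv (T.gBh.inv E) = T.gBv.inv E := by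
        show T.gBv.inv (T.gBh.inv (T.gBh.inv E)) = _
        rw [T.gBh.inv_inv]
      rw [hE2]
    refine ⟨A, ?_, ?_, ?_⟩
    · rw [hbotA, T.gH.s_inv]
    · rw [hbotA, T.gH.comp_inv]
    · rw [hlA, htA]
      have e1 : T.gBv.e E = T.gBv.s (T.gBv.inv E) := (T.gBv.s_inv E).symm
      have e2 : T.gBv.e (T.gBv.inv E) = T.gBv.s (T.gBh.id g) := by
        rw [T.gBv.e_inv, T.coreE_top hE, T.t_idh, hs]
      have e3 : T.gBv.e (T.gBh.id g) = T.gBv.s M := by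
        rw [T.b_idh, he, T.coreE_top hM]
      rw [T.gBv.comp_assoc _ _ _ e2 e3,
        ← T.gBv.comp_assoc E (T.gBv.inv E) _ e1
          (by rw [T.gBv.s_comp _ _ e3]; exact e2),
        T.gBv.comp_inv E, T.coreE_top hE, ← T.id_id,
        ← T.gBv.comp_assoc _ _ _
          (by rw [T.b_idh, T.gV.e_id, T.t_idh, hs]) e3,
        T.idh_vcomp _ _ (by rw [T.gV.e_id, hs]),
        ← hs, T.gV.id_comp,
        ← T.gBv.comp_assoc _ _ _
          (by rw [T.b_idh, T.gV.e_inv, T.t_idh]) e3,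
        T.idh_vcomp _ _ (by rw [T.gV.e_inv]),
        T.gV.inv_comp, he, T.id_id, ← T.coreE_top hM, T.gBv.id_comp]
  · rintro ⟨A, h1, h2, h3⟩
    have hbA : T.gBv.e A = T.gH.inv (T.gBv.e E) := T.gH.eq_inv_of_comp h1 h2
    have c1 : T.gBv.e E = T.gBv.s (T.tinv A) := by
      rw [T.t_tinv, hbA, T.gH.inv_inv]
    have c2 : T.gBv.e (T.gBh.id (T.gBh.s A)) =
        T.gBv.s (T.gBv.comp E (T.tinv A)) := by
      rw [T.b_idh, T.gBv.s_comp _ _ c1, T.coreE_top hE, ← T.corner_bl,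
        hbA, T.gH.s_inv]
    refine ⟨T.gV.inv (T.gBh.s A), ?_, ?_⟩
    · rw [T.gV.s_inv, ← T.corner_bl, hbA, T.gH.s_inv]
    · rw [T.gV.e_inv, ← T.corner_tl, h3, T.gBv.e_comp _ _ c2,
        T.gBv.e_comp _ _ c1, T.b_tinv, T.gH.e_inv]
end
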